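/- Let V be the vector space spanned by pairs (t, s) where t is a rooted tree and s is a pruning of t (i.e., s = P^{c}(t) for some admissible cut c of t). The product (t1, s1) ⤳ (t2, s2) := Σ_{v ∈ V(t2)\V(s2)} (t1 →_v t2, s1·s2), where the sum is over vertices of t2 not in s2 and s1·s2 denotes forest concatenation, satisfies the left pre-Lie identity. -/

import Mathlib

open scoped TensorProduct

/-- Planar rooted trees: a tree is a root together with a list of subtrees. -/
inductive RTree : Type where
  | node : List RTree → RTree

instance : Inhabited RTree := ⟨.node []⟩

namespace RTree

-- An injective code of a planar rooted tree.
mutual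
  def code : RTree → List ℕ
    | .node ts => ts.length :: codeL ts
  def codeL : List RTree → List ℕ
    | [] => []
    | t :: ts => code t ++ codeL ts
end

/-- Lexicographic comparison of codes. -/
def lleb : List ℕ → List ℕ → Bool
  | [], _ => true
  | _ :: _, [] => false
  | a :: as, b :: bs => decide (a < b) || (decide (a = b) && lleb as bs)

-- Normal form of a rooted tree: recursively sort the lists of subtrees.
-- Two planar trees represent the same abstract rooted tree iff they have the
-- same normal form.
mutual
  def norm : RTree → RTree
    | .node ts => .node ((normL ts).mergeSort fun a b => lleb (code a) (code b))
  def normL : List RTree → List RTree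
    | [] => []
    | t :: ts => norm t :: normL ts
end

-- Number of vertices.
mutual
  def size : RTree → ℕ
    | .node ts => 1 + sizeL ts
  def sizeL : List RTree → ℕ
    | [] => 0
    | t :: ts => size t + sizeL ts
end

-- Vertices of a tree, as positions (paths of child indices from the root).
mutual
  def vertices : RTree → List (List ℕ)
    | .node ts => [] :: verticesL 0 ts
  def verticesL : ℕ → List RTree → List (List ℕ)
    | _, [] => []
    | i, t :: ts => (vertices t).map (i :: ·) ++ verticesL (i + 1) ts
end

/-- `graftAt t p s` grafts the root of `t` on the vertex at position `p` of `s`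
(the new subtree is appended at the end, so positions of `s` are unchanged). -/
def graftAt (t : RTree) : List ℕ → RTree → RTree
  | [], .node ts => .node (ts ++ [t])
  | i :: q, .node ts =>
      .node (ts.set i (graftAt t q (ts.getD i (.node []))))

end RTree

/-- Abstract rooted trees: planar trees up to sibling permutation. -/
instance treeSetoid : Setoid RTree :=
  ⟨fun a b => a.norm = b.norm, ⟨fun _ => rfl, Eq.symm, Eq.trans⟩⟩

abbrev TreeQ := Quotient treeSetoid

def tq (t : RTree) : TreeQ := Quotient.mk treeSetoid t

/-- A forest, as a multiset of abstract rooted trees. -/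
def forestQ (l : List RTree) : Multiset TreeQ := (l.map tq : List TreeQ)

/-- The vector space `T` spanned by rooted trees. -/
abbrev TM := TreeQ →₀ ℚ

noncomputable def δT (t : RTree) : TM := Finsupp.single (tq t) 1

/-- `t → s`: the sum of all graftings of `t` on the vertices of `s`. -/
noncomputable def graftSum (t s : RTree) : TM :=
  ((RTree.vertices s).map fun p => δT (RTree.graftAt t p s)).sum

/-- The bilinear extension of the grafting product to `T`. -/
noncomputable def pre (a b : TM) : TM :=
  a.sum fun q c => b.sum fun r d => (c * d) • graftSum q.out r.out
/-- Rooted trees with a set of marked ("cut") edges: each child edge carries a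
Boolean which is `true` iff the edge belongs to the cut. -/
inductive CTree : Type where
  | node : List (Bool × CTree) → CTree

instance : Inhabited CTree := ⟨.node []⟩

namespace CTree

-- The underlying tree `t`.
mutual
  def forget : CTree → RTree
    | .node ts => .node (forgetL ts)
  def forgetL : List (Bool × CTree) → List RTree
    | [] => []
    | (_, c) :: ts => forget c :: forgetL ts
end

-- A tree with no marked edge at all.
mutual
  def noMarks : CTree → Bool
    | .node ts => noMarksL ts
  def noMarksL : List (Bool × CTree) → Bool
    | [] => true
    | (b, c) :: ts => !b && noMarks c && noMarksL ts
end

-- Admissibility of the cut: no marked edge above another marked edge,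
-- i.e. every path from the root to a leaf contains at most one cut edge.
mutual
  def adm : CTree → Bool
    | .node ts => admL ts
  def admL : List (Bool × CTree) → Bool
    | [] => true
    | (b, c) :: ts => (if b then noMarks c else adm c) && admL ts
end

-- The pruning `P^c(t)`: the subforest above the cut.
mutual
  def pruneF : CTree → List RTree
    | .node ts => pruneFL ts
  def pruneFL : List (Bool × CTree) → List RTree
    | [] => []
    | (b, c) :: ts => (if b then [forget c] else pruneF c) ++ pruneFL ts
end

-- The trunk `R^c(t)`: the subtree below the cut (containing the root).
mutual
  def trunk : CTree → RTree
    | .node ts => .node (trunkL ts)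
  def trunkL : List (Bool × CTree) → List RTree
    | [] => []
    | (b, c) :: ts => (if b then [] else [trunk c]) ++ trunkL ts
end

-- All vertex positions of the underlying tree.
mutual
  def allPos : CTree → List (List ℕ)
    | .node ts => [] :: allPosL 0 ts
  def allPosL : ℕ → List (Bool × CTree) → List (List ℕ)
    | _, [] => []
    | i, (_, c) :: ts => (allPos c).map (i :: ·) ++ allPosL (i + 1) ts
end

-- Positions of the vertices lying strictly above the cut (vertices of the pruning).
mutual
  def prunePos : CTree → List (List ℕ)
    | .node ts => prunePosL 0 ts
  def prunePosL : ℕ → List (Bool × CTree) → List (List ℕ)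
    | _, [] => []
    | i, (b, c) :: ts =>
        (if b then (allPos c).map (i :: ·) else (prunePos c).map (i :: ·)) ++
          prunePosL (i + 1) ts
end

-- Positions of the vertices of the trunk (not above the cut).
mutual
  def trunkPos : CTree → List (List ℕ)
    | .node ts => [] :: trunkPosL 0 ts
  def trunkPosL : ℕ → List (Bool × CTree) → List (List ℕ)
    | _, [] => []
    | i, (b, c) :: ts =>
        (if b then [] else (trunkPos c).map (i :: ·)) ++ trunkPosL (i + 1) ts
end

-- A plain tree viewed as a cut tree with no marks.
mutual
  def ofTree : RTree → CTree
    | .node ts => .node (ofTreeL ts)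
  def ofTreeL : List RTree → List (Bool × CTree)
    | [] => []
    | t :: ts => (false, ofTree t) :: ofTreeL ts
end

/-- `cgraft x p c` grafts the cut tree `x` (root edge unmarked) at the vertex
at position `p` of `c` (appended last, so positions of `c` are unchanged). -/
def cgraft (x : CTree) : List ℕ → CTree → CTree
  | [], .node ts => .node (ts ++ [(false, x)])
  | i :: q, .node ts =>
      .node (ts.set i
        ((ts.getD i (false, .node [])).1,
          cgraft x q (ts.getD i (false, .node [])).2))

-- injective code and normal form, as for plain trees
mutual
  def code : CTree → List ℕ
    | .node ts => ts.length :: codeL ts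
  def codeL : List (Bool × CTree) → List ℕ
    | [] => []
    | (b, c) :: ts => (if b then 1 else 0) :: (code c ++ codeL ts)
end

mutual
  def cnorm : CTree → CTree
    | .node ts =>
        .node ((cnormL ts).mergeSort fun a b =>
          RTree.lleb ((if a.1 then 1 else 0) :: code a.2) ((if b.1 then 1 else 0) :: code b.2))
  def cnormL : List (Bool × CTree) → List (Bool × CTree)
    | [] => []
    | (b, c) :: ts => (b, cnorm c) :: cnormL ts
end

end CTree

/-- Cut trees up to sibling permutation. -/
instance ctreeSetoid : Setoid CTree :=
  ⟨fun a b => a.cnorm = b.cnorm, ⟨fun _ => rfl, Eq.symm, Eq.trans⟩⟩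

abbrev CQ := Quotient ctreeSetoid

def cq (c : CTree) : CQ := Quotient.mk ctreeSetoid c
/-- The pair `(t, s)` (underlying tree, pruning) attached to a cut tree. -/
noncomputable def pairQ (c : CTree) : TreeQ × Multiset TreeQ :=
  (tq c.forget, forestQ c.pruneF)

/-- The module spanned by pairs (tree, forest); it contains the doubling
space `V` spanned by the pairs (tree, pruning of that tree). -/
abbrev MV := (TreeQ × Multiset TreeQ) →₀ ℚ

noncomputable def δV (c : CTree) : MV := Finsupp.single (pairQ c) 1

noncomputable def toMV (l : List CTree) : MV := (l.map δV).sum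

/-- `(t, s)` belongs to the doubling space `V`, i.e. `s` is the pruning of `t`
along some admissible cut. -/
def PairInV (p : TreeQ × Multiset TreeQ) : Prop :=
  ∃ c : CTree, c.adm = true ∧ pairQ c = p

/-- The doubling pre-Lie product `⤳` at the level of cut trees:
graft the first tree on each vertex of the second one which is not a
vertex of its pruning (i.e. on each trunk vertex). -/
def dmul (c₁ c₂ : CTree) : List CTree :=
  (CTree.trunkPos c₂).map fun p => CTree.cgraft c₁ p c₂

/-- The action `◇` of a tree on the doubling space: graft the tree on each
vertex of the pruning. -/
def dAct (t : RTree) (c : CTree) : List CTree :=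
  (CTree.prunePos c).map fun p => CTree.cgraft (CTree.ofTree t) p c

/-- `t → s` at list level: all graftings of `t` on vertices of `s`. -/
def rmulAll (t s : RTree) : List RTree :=
  (RTree.vertices s).map fun p => RTree.graftAt t p s

/-- All graftings of a tree on the vertices of a forest. -/
def fgraftAll (t : RTree) (f : List RTree) : List (List RTree) :=
  (List.range f.length).flatMap fun i =>
    (rmulAll t (f.getD i default)).map fun w => f.set i w

-- Admissible cuts of a tree/forest, with the associated (pruning, trunk).
mutual
  def treeCuts : RTree → List (List RTree × List RTree)
    | .node ts =>
        ([.node ts], []) ::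
          (forestCuts ts).map fun pr => (pr.1, [RTree.node pr.2])
  def forestCuts : List RTree → List (List RTree × List RTree)
    | [] => [([], [])]
    | t :: ts =>
        (treeCuts t).flatMap fun pr =>
          (forestCuts ts).map fun qr => (pr.1 ++ qr.1, pr.2 ++ qr.2)
end
-- The coproduct of the doubling bialgebra at the level of cut trees:
-- `delta c` enumerates the admissible cuts `c'` of the pruning `s` of `c`,
-- returning the pair of cut trees representing `(t, P^{c'}(s))` and
-- `(R^{c'}(t), R^{c'}(s))`.
mutual
  def cutsP : CTree → List (CTree × CTree)
    | .node ts => (cutsPL ts).map fun pr => (.node pr.1, .node pr.2)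
  def cutsPL : List (Bool × CTree) → List (List (Bool × CTree) × List (Bool × CTree))
    | [] => [([], [])]
    | (_, c) :: ts =>
        (cutsPL ts).flatMap fun pr =>
          ((true, c) :: pr.1, pr.2) ::
            (cutsP c).map fun qr => ((false, qr.1) :: pr.1, (false, qr.2) :: pr.2)
end

mutual
  def delta : CTree → List (CTree × CTree)
    | .node ts => (deltaL ts).map fun pr => (.node pr.1, .node pr.2)
  def deltaL : List (Bool × CTree) → List (List (Bool × CTree) × List (Bool × CTree))
    | [] => [([], [])]
    | (b, c) :: ts =>
        (deltaL ts).flatMap fun pr =>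
          if b then
            ((true, c) :: pr.1, pr.2) ::
              (cutsP c).map fun qr => ((false, qr.1) :: pr.1, (true, qr.2) :: pr.2)
          else
            (delta c).map fun qr => ((false, qr.1) :: pr.1, (false, qr.2) :: pr.2)
end

/-- The Connes–Kreimer Hopf algebra of rooted trees `H = S(T)`,
with basis the forests (multisets of rooted trees). -/
abbrev HCK := AddMonoidAlgebra ℚ (Multiset TreeQ)

noncomputable def singleH (f : Multiset TreeQ) : HCK := AddMonoidAlgebra.single f 1

noncomputable def oneH : HCK := AddMonoidAlgebra.single 0 1

noncomputable def δH (t : RTree) : HCK := singleH {tq t}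

/-- The doubling bialgebra `D = S(V)`, with basis the multisets of
(isomorphism classes of admissibly) cut trees. -/
abbrev DD := AddMonoidAlgebra ℚ (Multiset CQ)

noncomputable def singleD (m : Multiset CQ) : DD := AddMonoidAlgebra.single m 1

noncomputable def δD (c : CTree) : DD := singleD {cq c}

noncomputable def cfq (f : List CTree) : Multiset CQ := (f.map cq : List CQ)

/-- Admissible-cut coproduct on `H`, on a single tree. -/
noncomputable def ΔT (t : RTree) : HCK ⊗[ℚ] HCK :=
  ((treeCuts t).map fun pr => singleH (forestQ pr.1) ⊗ₜ[ℚ] singleH (forestQ pr.2)).sum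

/-- Admissible-cut coproduct on `H`, as a linear map (multiplicative on forests). -/
noncomputable def ΔH : HCK →ₗ[ℚ] HCK ⊗[ℚ] HCK :=
  (Finsupp.lsum ℚ fun (m : Multiset TreeQ) =>
    LinearMap.toSpanSingleton ℚ _ ((m.map fun q => ΔT q.out).prod)) ∘ₗ (AddMonoidAlgebra.coeffLinearEquiv ℚ).toLinearMap

/-- The coproduct of the doubling bialgebra on a single pair. -/
noncomputable def ΔVt (c : CTree) : DD ⊗[ℚ] DD :=
  ((delta c).map fun pr => δD pr.1 ⊗ₜ[ℚ] δD pr.2).sum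

/-- The coproduct of the doubling bialgebra, as a linear map `D → D ⊗ D`. -/
noncomputable def ΔD : DD →ₗ[ℚ] DD ⊗[ℚ] DD :=
  (Finsupp.lsum ℚ fun (m : Multiset CQ) =>
    LinearMap.toSpanSingleton ℚ _ ((m.map fun q => ΔVt q.out).prod)) ∘ₗ (AddMonoidAlgebra.coeffLinearEquiv ℚ).toLinearMap

/-- The counit of the doubling bialgebra: `ε (t, s) = ε (s)`. -/
noncomputable def εD : DD →ₗ[ℚ] ℚ :=
  (Finsupp.lsum ℚ fun (m : Multiset CQ) =>
    LinearMap.toSpanSingleton ℚ _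
      ((m.map fun q => if (Quotient.out q).pruneF.length = 0 then (1 : ℚ) else 0).prod)) ∘ₗ (AddMonoidAlgebra.coeffLinearEquiv ℚ).toLinearMap

/-- The unshuffling coproduct `Γ` of `H' = S(T)`. -/
noncomputable def ΓH : HCK →ₗ[ℚ] HCK ⊗[ℚ] HCK :=
  (Finsupp.lsum ℚ fun (m : Multiset TreeQ) =>
    LinearMap.toSpanSingleton ℚ _
      (((Multiset.antidiagonal m).map fun pq => singleH pq.1 ⊗ₜ[ℚ] singleH pq.2).sum)) ∘ₗ (AddMonoidAlgebra.coeffLinearEquiv ℚ).toLinearMap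

/-- The unshuffling coproduct `χ` of `D' = S(V)`. -/
noncomputable def χD : DD →ₗ[ℚ] DD ⊗[ℚ] DD :=
  (Finsupp.lsum ℚ fun (m : Multiset CQ) =>
    LinearMap.toSpanSingleton ℚ _
      (((Multiset.antidiagonal m).map fun pq => singleD pq.1 ⊗ₜ[ℚ] singleD pq.2).sum)) ∘ₗ (AddMonoidAlgebra.coeffLinearEquiv ℚ).toLinearMap

/-- The second projection `P₂ (t, s) = s`, as a linear map `D → H`. -/
noncomputable def P₂ : DD →ₗ[ℚ] HCK :=
  (Finsupp.lsum ℚ fun (m : Multiset CQ) =>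
    LinearMap.toSpanSingleton ℚ _ (singleH ((m.map fun q => forestQ (Quotient.out q).pruneF).sum))) ∘ₗ (AddMonoidAlgebra.coeffLinearEquiv ℚ).toLinearMap
/-- Representative forest (list of planar trees) of a multiset of tree classes. -/
noncomputable def repT (m : Multiset TreeQ) : List RTree := m.toList.map Quotient.out

/-- A single tree acting by grafting on `H` (extended Oudom–Guin `▷` of a tree
on products: graft on one factor of each forest). -/
noncomputable def rrtrT (t : RTree) (x : HCK) : HCK :=
  x.coeff.sum fun m r => r • ((fgraftAll t (repT m)).map fun f => singleH (forestQ f)).sum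

/-- The Oudom–Guin extension of the grafting pre-Lie product of rooted trees to
forests: `1 ▷ b = b`, `(x a) ▷ b = x ▷ (a ▷ b) - (x ▷ a) ▷ b`
(defined with a fuel argument equal to the length of the forest). -/
noncomputable def rrtrL : ℕ → List RTree → HCK → HCK
  | _, [], x => x
  | 0, _ :: _, _ => 0
  | n + 1, t :: a, x =>
      rrtrT t (rrtrL n a x) - ((fgraftAll t a).map fun b => rrtrL n b x).sum

noncomputable def rrtrF (a : List RTree) (x : HCK) : HCK := rrtrL a.length a x

/-- The Oudom–Guin product `⋆` on `H' = S(T)`: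
`a ⋆ b = Σ a⁽¹⁾ (a⁽²⁾ ▷ b)`. -/
noncomputable def starH (x y : HCK) : HCK :=
  x.coeff.sum fun m r =>
    r • ((Multiset.antidiagonal m).map fun pq => singleH pq.1 * rrtrF (repT pq.2) y).sum

/-- The module of pairs of forests (first component ⊗ pruning component),
receiving both `D'` and the image of the map `α`. -/
abbrev WD := (Multiset TreeQ × Multiset TreeQ) →₀ ℚ

/-- `α ((f, s) ⊗ y) = (f ⋆ y, s)`. -/
noncomputable def alphaW (x : WD) (y : HCK) : WD :=
  x.sum fun p c =>
    c • Finsupp.mapDomain (fun g => (g, p.2)) (starH (singleH p.1) y).coeff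

/-- Representative list of cut trees of a multiset of cut-tree classes. -/
noncomputable def repC (m : Multiset CQ) : List CTree := m.toList.map Quotient.out

/-- Graftings of a cut tree on one factor of a forest of cut trees, where the
admitted grafting positions on each factor are prescribed by `g`. -/
def fgraftC (g : CTree → CTree → List CTree) (c : CTree) (f : List CTree) :
    List (List CTree) :=
  (List.range f.length).flatMap fun i =>
    (g c (f.getD i default)).map fun w => f.set i w

/-- all-vertex graftings of a cut tree on a cut tree (used for the `H'`-product
acting on the first components). -/
def dmulAll (c₁ c₂ : CTree) : List CTree :=
  (CTree.allPos c₂).map fun p => CTree.cgraft c₁ p c₂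

noncomputable def singleDF (f : List CTree) : DD := singleD (cfq f)

/-- A single cut tree acting on `D` by `g`-grafting on one factor. -/
noncomputable def crtrT (g : CTree → CTree → List CTree) (c : CTree) (x : DD) : DD :=
  x.coeff.sum fun m r => r • ((fgraftC g c (repC m)).map singleDF).sum

/-- Oudom–Guin extension of the `g`-grafting pre-Lie product to forests of cut
trees (fuel version). -/
noncomputable def crtrL (g : CTree → CTree → List CTree) : ℕ → List CTree → DD → DD
  | _, [], x => x
  | 0, _ :: _, _ => 0
  | n + 1, c :: a, x =>
      crtrT g c (crtrL g n a x) - ((fgraftC g c a).map fun b => crtrL g n b x).sum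

noncomputable def crtrF (g : CTree → CTree → List CTree) (a : List CTree) (x : DD) : DD :=
  crtrL g a.length a x

/-- Oudom–Guin product on `S` of cut trees associated with the grafting rule `g`. -/
noncomputable def starC (g : CTree → CTree → List CTree) (x y : DD) : DD :=
  x.coeff.sum fun m r =>
    r • ((Multiset.antidiagonal m).map fun pq => singleD pq.1 * crtrF g (repC pq.2) y).sum

/-- The Oudom–Guin product `★` of the doubling pre-Lie algebra `(V, ⤳)`. -/
noncomputable def starD : DD → DD → DD := starC dmul

/-- The Oudom–Guin product `⋆` of `(T, →)` acting on decorated elements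
(grafting on all vertices). -/
noncomputable def starDAll : DD → DD → DD := starC dmulAll

/-- `H'` embedded in the decorated algebra (forests with no cut edge). -/
noncomputable def embedH (x : HCK) : DD :=
  x.coeff.sum fun m r => AddMonoidAlgebra.single (m.map fun q => cq (CTree.ofTree (Quotient.out q))) r

/-- The action `α (x ⊗ y) = (t ⋆ y, s)` computed on decorated elements. -/
noncomputable def alphaD (x : DD) (y : HCK) : DD := starDAll x (embedH y)

/-- Projection of a decorated element onto the pair
`(underlying forest, total pruning)`. -/
noncomputable def πD : DD →ₗ[ℚ] WD :=
  (Finsupp.lsum ℚ fun (m : Multiset CQ) =>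
    LinearMap.toSpanSingleton ℚ _
      (Finsupp.single
        (m.map fun q => tq (Quotient.out q).forget,
          (m.map fun q => forestQ (Quotient.out q).pruneF).sum) (1 : ℚ))) ∘ₗ (AddMonoidAlgebra.coeffLinearEquiv ℚ).toLinearMap




section PreLieAux
open RTree (lleb) in
section
local notation "code" => RTree.code
local notation "codeL" => RTree.codeL
local notation "norm" => RTree.norm
local notation "normL" => RTree.normL

lemma lleb_total : ∀ x y : List ℕ, lleb x y = true ∨ lleb y x = true
  | [], _ => Or.inl rfl
  | _ :: _, [] => Or.inr rfl
  | a :: as, b :: bs => by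
    rcases Nat.lt_trichotomy a b with h | h | h
    · left; simp [lleb, h]
    · subst h
      rcases lleb_total as bs with h | h
      · left; simp [lleb, h]
      · right; simp [lleb, h]
    · right; simp [lleb, h]

lemma lleb_antisymm : ∀ x y : List ℕ, lleb x y = true → lleb y x = true → x = y
  | [], [], _, _ => rfl
  | [], _ :: _, _, h => by simp [lleb] at h
  | _ :: _, [], h, _ => by simp [lleb] at h
  | a :: as, b :: bs, h1, h2 => by
    simp only [lleb, Bool.or_eq_true, Bool.and_eq_true, decide_eq_true_eq] at h1 h2
    obtain h1 | ⟨rfl, h1⟩ := h1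
    · obtain h2 | ⟨rfl, h2⟩ := h2 <;> omega
    · obtain h2 | ⟨-, h2⟩ := h2
      · omega
      · rw [lleb_antisymm as bs h1 h2]

lemma lleb_trans : ∀ x y z : List ℕ, lleb x y = true → lleb y z = true → lleb x z = true
  | [], _, _, _, _ => rfl
  | _ :: _, [], _, h, _ => by simp [lleb] at h
  | _ :: _, _ :: _, [], _, h => by simp [lleb] at h
  | a :: as, b :: bs, c :: cs, h1, h2 => by
    simp only [lleb, Bool.or_eq_true, Bool.and_eq_true, decide_eq_true_eq] at h1 h2 ⊢
    obtain h1 | ⟨rfl, h1⟩ := h1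
    · obtain h2 | ⟨rfl, h2⟩ := h2
      · left; omega
      · left; exact h1
    · obtain h2 | ⟨rfl, h2⟩ := h2
      · left; exact h2
      · right; exact ⟨rfl, lleb_trans as bs cs h1 h2⟩

mutual
theorem code_append_inj : ∀ (t t' : RTree) (u u' : List ℕ),
    code t ++ u = code t' ++ u' → t = t' ∧ u = u'
  | .node ts, .node ts', u, u', h => by
    simp only [RTree.code] at h
    simp only [List.cons_append, List.cons.injEq] at h
    obtain ⟨hlen, h⟩ := h
    obtain ⟨h1, h2⟩ := codeL_append_inj ts ts' hlen u u' h
    exact ⟨by rw [h1], h2⟩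
theorem codeL_append_inj : ∀ (ts ts' : List RTree), ts.length = ts'.length →
    ∀ u u' : List ℕ, codeL ts ++ u = codeL ts' ++ u' → ts = ts' ∧ u = u'
  | [], [], _, _, _, h => ⟨rfl, h⟩
  | [], _ :: _, hlen, _, _, _ => by simp at hlen
  | _ :: _, [], hlen, _, _, _ => by simp at hlen
  | t :: ts, t' :: ts', hlen, u, u', h => by
    simp only [RTree.codeL] at h
    rw [List.append_assoc, List.append_assoc] at h
    obtain ⟨h1, h2⟩ := code_append_inj t t' _ _ h
    obtain ⟨h3, h4⟩ := codeL_append_inj ts ts' (by simpa using hlen) u u' h2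
    exact ⟨by rw [h1, h3], h4⟩
end

lemma code_inj {t t' : RTree} (h : code t = code t') : t = t' :=
  (code_append_inj t t' [] [] (by simp [h])).1

instance rtree_isAntisymm :
    IsAntisymm RTree (fun a b => lleb (code a) (code b) = true) :=
  ⟨fun _ _ h1 h2 => code_inj (lleb_antisymm _ _ h1 h2)⟩

lemma normL_eq_map : ∀ l : List RTree, normL l = l.map norm
  | [] => rfl
  | t :: ts => by simp only [RTree.normL]; rw [normL_eq_map ts, List.map_cons]

lemma norm_node_perm {l1 l2 : List RTree} (h : (l1.map norm).Perm (l2.map norm)) :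
    norm (.node l1) = norm (.node l2) := by
  simp only [RTree.norm]
  rw [normL_eq_map, normL_eq_map]
  have tot : ∀ a b : RTree, (lleb (code a) (code b) || lleb (code b) (code a)) = true := by
    intro a b; rcases lleb_total (code a) (code b) with h | h <;> simp [h]
  have tr : ∀ a b c : RTree, lleb (code a) (code b) = true → lleb (code b) (code c) = true →
      lleb (code a) (code c) = true := fun a b c => lleb_trans _ _ _
  congr 1
  refine List.Perm.eq_of_pairwise (le := fun a b : RTree => lleb (code a) (code b) = true)
    (fun _ _ _ _ h1 h2 => code_inj (lleb_antisymm _ _ h1 h2)) ?_ ?_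
    (((List.mergeSort_perm _ _).trans h).trans (List.mergeSort_perm _ _).symm)
  · exact List.pairwise_mergeSort tr tot _
  · exact List.pairwise_mergeSort tr tot _

lemma tq_congr {a b : RTree} (h : norm a = norm b) : tq a = tq b := Quotient.sound h

lemma norm_eq_of_tq {a b : RTree} (h : tq a = tq b) : norm a = norm b := Quotient.exact h

end
end PreLieAux
section PreLieAux2

lemma forgetL_eq_map : ∀ l : List (Bool × CTree),
    CTree.forgetL l = l.map (fun e => e.2.forget)
  | [] => rfl
  | (b, c) :: ts => by
    simp only [CTree.forgetL]; rw [forgetL_eq_map ts]; rfl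

lemma pruneFL_eq_flatMap : ∀ l : List (Bool × CTree),
    CTree.pruneFL l = l.flatMap (fun e => if e.1 then [e.2.forget] else e.2.pruneF)
  | [] => rfl
  | (b, c) :: ts => by
    simp only [CTree.pruneFL]; rw [pruneFL_eq_flatMap ts]; rfl

lemma forestQ_append (l1 l2 : List RTree) :
    forestQ (l1 ++ l2) = forestQ l1 + forestQ l2 := by
  simp only [forestQ, List.map_append]
  exact (Multiset.coe_add _ _).symm ▸ rfl

lemma forestQ_perm {l1 l2 : List RTree} (h : l1.Perm l2) : forestQ l1 = forestQ l2 :=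
  Multiset.coe_eq_coe.2 (h.map tq)

lemma forestQ_congr {l1 l2 : List RTree} (h : l1.map tq = l2.map tq) :
    forestQ l1 = forestQ l2 := by simp only [forestQ, h]

lemma pairQ_node_perm {l1 l2 : List (Bool × CTree)} (h : l1.Perm l2) :
    pairQ (CTree.node l1) = pairQ (CTree.node l2) := by
  unfold pairQ
  simp only [CTree.forget, CTree.pruneF]
  rw [forgetL_eq_map, forgetL_eq_map, pruneFL_eq_flatMap, pruneFL_eq_flatMap]
  refine Prod.ext ?_ ?_
  · exact tq_congr (norm_node_perm ((h.map _).map _))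
  · exact forestQ_perm (h.flatMap_right _)

lemma pairQ_node_congr {l1 l2 : List (Bool × CTree)}
    (h1 : (l1.map (fun e => e.2.forget)).map RTree.norm
        = (l2.map (fun e => e.2.forget)).map RTree.norm)
    (h2 : forestQ (l1.flatMap (fun e => if e.1 then [e.2.forget] else e.2.pruneF))
        = forestQ (l2.flatMap (fun e => if e.1 then [e.2.forget] else e.2.pruneF))) :
    pairQ (CTree.node l1) = pairQ (CTree.node l2) := by
  unfold pairQ
  simp only [CTree.forget, CTree.pruneF]
  rw [forgetL_eq_map, forgetL_eq_map, pruneFL_eq_flatMap, pruneFL_eq_flatMap]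
  refine Prod.ext ?_ ?_
  · exact tq_congr (norm_node_perm (h1 ▸ List.Perm.refl _))
  · exact h2

lemma pairQ_node_set {ts : List (Bool × CTree)} {i : ℕ} (hi : i < ts.length)
    {b : Bool} {x y : CTree}
    (hx : tq x.forget = tq y.forget) (hp : forestQ x.pruneF = forestQ y.pruneF) :
    pairQ (.node (ts.set i (b, x))) = pairQ (.node (ts.set i (b, y))) := by
  have hset : ∀ z : CTree, ts.set i (b, z)
      = ts.take i ++ (b, z) :: ts.drop (i + 1) := by
    intro z
    rw [List.set_eq_take_append_cons_drop, if_pos hi]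
  rw [hset x, hset y]
  apply pairQ_node_congr
  · simp only [List.map_append, List.map_cons]
    rw [norm_eq_of_tq hx]
  · simp only [List.flatMap_append, List.flatMap_cons]
    rw [forestQ_append, forestQ_append, forestQ_append, forestQ_append]
    congr 1
    congr 1
    by_cases hb : b
    · simp only [hb, if_true]
      simp only [forestQ, List.map_cons, List.map_nil]
      rw [hx]
    · simpa only [hb, Bool.false_eq_true, if_false] using hp

end PreLieAux2
section PreLieAux3

@[simp] abbrev d0 : Bool × CTree := (false, CTree.node [])

lemma coe_append {α : Type*} (l1 l2 : List α) :
    ((l1 ++ l2 : List α) : Multiset α) = (l1 : Multiset α) + (l2 : Multiset α) := by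
  exact (Multiset.coe_add _ _).symm ▸ rfl

lemma coe_cons {α : Type*} (a : α) (l : List α) :
    ((a :: l : List α) : Multiset α) = {a} + (l : Multiset α) := by
  rw [Multiset.singleton_add]; rfl

lemma getD_set_self {α : Type*} {l : List α} {i : ℕ} (h : i < l.length) (a d : α) :
    (l.set i a).getD i d = a := by
  simp [List.getD, List.getElem?_set_self h]

lemma getD_set_ne {α : Type*} {l : List α} {i j : ℕ} (h : i ≠ j) (a d : α) :
    (l.set i a).getD j d = l.getD j d := by
  simp [List.getD, List.getElem?_set_ne h]

/-- Number of children at a given position. -/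
def numCh : List ℕ → CTree → ℕ
  | [], .node ts => ts.length
  | i :: q, .node ts => numCh q (ts.getD i (false, CTree.node [])).2

/-- Validity of a position in a cut tree. -/
def ValidP : List ℕ → CTree → Prop
  | [], _ => True
  | i :: q, .node ts => i < ts.length ∧ ValidP q (ts.getD i (false, CTree.node [])).2

lemma mem_trunkPosL : ∀ (l : List (Bool × CTree)) (j : ℕ) (p : List ℕ),
    p ∈ CTree.trunkPosL j l →
    ∃ k, k < l.length ∧ ∃ r, p = (j + k) :: r ∧
      (l.getD k (false, CTree.node [])).1 = false ∧
      r ∈ CTree.trunkPos (l.getD k (false, CTree.node [])).2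
  | [], j, p, h => by simp [CTree.trunkPosL] at h
  | (b, c) :: ts, j, p, h => by
    rw [CTree.trunkPosL] at h
    rcases List.mem_append.1 h with h | h
    · by_cases hb : b
      · rw [if_pos hb] at h; exact absurd h (List.not_mem_nil (a := p))
      · rw [if_neg hb] at h
        obtain ⟨r, hr, he⟩ := List.mem_map.1 h
        refine ⟨0, by simp, r, ?_, by simp [hb], by simpa using hr⟩
        rw [← he, Nat.add_zero]
    · obtain ⟨k, hk, r, rfl, h1, h2⟩ := mem_trunkPosL ts (j + 1) p h
      refine ⟨k + 1, by simpa using hk, r, by rw [show j + (k+1) = j + 1 + k by omega],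
        by simpa using h1, by simpa using h2⟩

lemma validP_of_mem : ∀ (p : List ℕ) (c : CTree), p ∈ CTree.trunkPos c → ValidP p c
  | [], _, _ => trivial
  | i :: q, .node ts, h => by
    rw [CTree.trunkPos] at h
    rcases List.mem_cons.1 h with h | h
    · exact absurd h (by simp)
    · obtain ⟨k, hk, r, he, h1, h2⟩ := mem_trunkPosL ts 0 _ h
      rw [Nat.zero_add] at he
      injection he with he1 he2
      subst he1; subst he2
      exact ⟨hk, validP_of_mem q _ h2⟩

lemma trunkPosL_append : ∀ (l1 : List (Bool × CTree)) (j : ℕ) (l2 : List (Bool × CTree)),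
    CTree.trunkPosL j (l1 ++ l2)
      = CTree.trunkPosL j l1 ++ CTree.trunkPosL (j + l1.length) l2
  | [], j, l2 => by simp [CTree.trunkPosL]
  | (b, c) :: ts, j, l2 => by
    simp only [List.cons_append, CTree.trunkPosL, List.append_eq]
    rw [trunkPosL_append ts (j + 1) l2, List.append_assoc, List.length_cons,
      show j + (ts.length + 1) = j + 1 + ts.length by omega]

/-- Grafting inside a grafted subtree. -/
lemma cgraft_cgraft : ∀ (q : List ℕ) (c : CTree), ValidP q c → ∀ (r' : List ℕ) (a b : CTree),
    CTree.cgraft a (q ++ numCh q c :: r') (CTree.cgraft b q c)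
      = CTree.cgraft (CTree.cgraft a r' b) q c
  | [], .node ts, _, r', a, b => by
    simp only [numCh, List.nil_append, CTree.cgraft]
    have hg : (ts ++ [(false, b)]).getD ts.length (false, CTree.node []) = (false, b) := by
      simp [List.getD, List.getElem?_concat_length]
    rw [hg, List.set_append_right _ _ (le_refl _)]
    simp
  | i :: q, .node ts, hv, r', a, b => by
    obtain ⟨hi, hv⟩ := hv
    simp only [numCh, List.cons_append, CTree.cgraft, List.append_eq]
    rw [getD_set_self (by simpa using hi), List.set_set]
    rw [cgraft_cgraft q _ hv r' a b]

/-- Commutation of graftings at two (possibly equal) valid positions,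
up to `pairQ`. -/
lemma pairQ_cgraft_comm : ∀ (p : List ℕ) (c : CTree), ValidP p c →
    ∀ (p' : List ℕ), ValidP p' c → ∀ a b : CTree,
    pairQ (CTree.cgraft a p' (CTree.cgraft b p c))
      = pairQ (CTree.cgraft b p (CTree.cgraft a p' c))
  | [], .node ts, _, [], _, a, b => by
    simp only [CTree.cgraft]
    refine pairQ_node_perm ?_
    rw [List.append_assoc, List.append_assoc]
    exact List.Perm.append_left ts (List.Perm.swap _ _ _)
  | [], .node ts, _, i :: pt', hv', a, b => by
    obtain ⟨hi, -⟩ := hv'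
    simp only [CTree.cgraft]
    congr 1
    have hg : (ts ++ [(false, b)]).getD i (false, CTree.node [])
        = ts.getD i (false, CTree.node []) := by
      simp [List.getD, List.getElem?_append_left hi]
    rw [hg, List.set_append_left _ _ hi]
  | i :: pt, .node ts, hv, [], _, a, b => by
    obtain ⟨hi, -⟩ := hv
    simp only [CTree.cgraft]
    congr 1
    have hg : (ts ++ [(false, a)]).getD i (false, CTree.node [])
        = ts.getD i (false, CTree.node []) := by
      simp [List.getD, List.getElem?_append_left hi]
    rw [hg, List.set_append_left _ _ hi]
  | i :: pt, .node ts, hv, j :: pt', hv', a, b => by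
    obtain ⟨hi, hvi⟩ := hv
    obtain ⟨hj, hvj⟩ := hv'
    by_cases hij : i = j
    · subst hij
      simp only [CTree.cgraft]
      rw [getD_set_self (by simpa using hi), getD_set_self (by simpa using hi),
        List.set_set, List.set_set]
      have ih := pairQ_cgraft_comm pt _ hvi pt' hvj a b
      exact pairQ_node_set hi (congrArg Prod.fst ih) (congrArg Prod.snd ih)
    · simp only [CTree.cgraft]
      rw [getD_set_ne hij, getD_set_ne (Ne.symm hij), List.set_comm _ _ hij]

end PreLieAux3
section PreLieAux4

lemma trunkPos_cgraft (x : CTree) : ∀ (q : List ℕ) (c : CTree), q ∈ CTree.trunkPos c →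
    (CTree.trunkPos (CTree.cgraft x q c) : Multiset (List ℕ)) =
      (CTree.trunkPos c : Multiset (List ℕ))
        + (((CTree.trunkPos x).map fun r => q ++ numCh q c :: r : List (List ℕ)) :
            Multiset (List ℕ))
  | [], .node ts, _ => by
    simp only [CTree.cgraft, CTree.trunkPos, numCh, List.nil_append]
    rw [trunkPosL_append ts 0 [(false, x)]]
    have h1 : CTree.trunkPosL (0 + ts.length) [(false, x)]
        = (CTree.trunkPos x).map (ts.length :: ·) := by
      rw [CTree.trunkPosL, CTree.trunkPosL]
      simp
    rw [h1]
    have h2 : ([] :: (CTree.trunkPosL 0 ts ++ (CTree.trunkPos x).map (ts.length :: ·)))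
        = ([] :: CTree.trunkPosL 0 ts) ++ (CTree.trunkPos x).map (ts.length :: ·) := by
      simp
    rw [h2, coe_append]
  | i :: q, .node ts, hm => by
    have hm' : i :: q ∈ CTree.trunkPosL 0 ts := by
      rw [CTree.trunkPos] at hm
      rcases List.mem_cons.1 hm with h | h
      · exact absurd h (by simp)
      · exact h
    obtain ⟨k, hk, r, he, hb, hr⟩ := mem_trunkPosL ts 0 _ hm'
    rw [Nat.zero_add] at he
    injection he with he1 he2
    subst he1; subst he2
    have hlen : (ts.take i).length = i := by
      rw [List.length_take]; omega
    have hset : ∀ z : Bool × CTree, ts.set i z = ts.take i ++ z :: ts.drop (i + 1) := by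
      intro z; rw [List.set_eq_take_append_cons_drop, if_pos hk]
    have hsetself : ts.set i (ts.getD i (false, CTree.node [])) = ts := by
      apply List.ext_getElem (by simp)
      intro n h1 h2
      rw [List.getElem_set]
      split
      · next h => subst h; rw [List.getD_eq_getElem _ _ hk]
      · rfl
    have hts : ts = ts.take i ++ ts.getD i (false, CTree.node []) :: ts.drop (i + 1) := by
      conv_lhs => rw [← hsetself]
      exact hset _
    have expand : ∀ z : Bool × CTree, CTree.trunkPosL 0 (ts.take i ++ z :: ts.drop (i + 1))
        = CTree.trunkPosL 0 (ts.take i)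
          ++ ((if z.1 then [] else (CTree.trunkPos z.2).map (i :: ·))
              ++ CTree.trunkPosL (i + 1) (ts.drop (i + 1))) := by
      rintro ⟨zb, zc⟩
      rw [trunkPosL_append, hlen, Nat.zero_add, CTree.trunkPosL]
    have lhs1 : CTree.cgraft x (i :: q) (CTree.node ts)
        = CTree.node (ts.set i (false, CTree.cgraft x q (ts.getD i (false, CTree.node [])).2)) := by
      rw [CTree.cgraft, hb]
    rw [lhs1, CTree.trunkPos, hset, expand]
    simp only [Bool.false_eq_true, if_false]
    conv_rhs => rw [CTree.trunkPos]
    have rhs1 : CTree.trunkPosL 0 ts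
        = CTree.trunkPosL 0 (ts.take i)
          ++ ((CTree.trunkPos (ts.getD i (false, CTree.node [])).2).map (i :: ·)
              ++ CTree.trunkPosL (i + 1) (ts.drop (i + 1))) := by
      conv_lhs => rw [hts]
      rw [expand]
      simp only [hb, Bool.false_eq_true, if_false]
    rw [rhs1]
    have ih := trunkPos_cgraft x q (ts.getD i (false, CTree.node [])).2 hr
    have hmap : (((CTree.trunkPos (CTree.cgraft x q (ts.getD i (false, CTree.node [])).2)).map
          (i :: ·) : List (List ℕ)) : Multiset (List ℕ))
        = (((CTree.trunkPos (ts.getD i (false, CTree.node [])).2).map (i :: ·) :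
            List (List ℕ)) : Multiset (List ℕ))
          + (((CTree.trunkPos x).map fun r =>
              (i :: q) ++ numCh (i :: q) (CTree.node ts) :: r : List (List ℕ)) :
              Multiset (List ℕ)) := by
      rw [← Multiset.map_coe, ih, Multiset.map_add, Multiset.map_coe, Multiset.map_coe,
        List.map_map]
      rfl
    simp only [coe_cons, coe_append]
    rw [hmap]
    abel
  termination_by q => q.length

end PreLieAux4
section PreLieAux5

lemma coe_flatMap {α β : Type*} (l : List α) (f : α → List β) :
    ((l.flatMap f : List β) : Multiset β) = (l : Multiset α).bind (fun a => (f a : Multiset β)) := by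
  induction l with
  | nil => simp
  | cons a t ih =>
    rw [List.flatMap_cons, coe_append, ih,
      show ((a :: t : List α) : Multiset α) = a ::ₘ (t : Multiset α) from rfl,
      Multiset.cons_bind]

lemma MQ_flatMap {α : Type*} (l : List α) (f : α → List CTree) :
    (((l.flatMap f).map pairQ : List _) : Multiset (TreeQ × Multiset TreeQ))
      = (l : Multiset α).bind fun a => (((f a).map pairQ : List _) : Multiset _) := by
  rw [← Multiset.map_coe, coe_flatMap, Multiset.map_bind]
  simp [Multiset.map_coe]

lemma MQ_dmul (a w : CTree) :
    (((dmul a w).map pairQ : List _) : Multiset (TreeQ × Multiset TreeQ))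
      = (CTree.trunkPos w : Multiset (List ℕ)).bind
          fun r => {pairQ (CTree.cgraft a r w)} := by
  rw [dmul, List.map_map, ← Multiset.map_coe]
  exact (Multiset.bind_singleton _ _).symm

lemma toMV_append (l1 l2 : List CTree) : toMV (l1 ++ l2) = toMV l1 + toMV l2 := by
  rw [toMV, toMV, toMV, List.map_append, List.sum_append]

lemma toMV_congr {l1 l2 : List CTree}
    (h : ((l1.map pairQ : List _) : Multiset (TreeQ × Multiset TreeQ)) = (l2.map pairQ : List _)) :
    toMV l1 = toMV l2 := by
  have hperm : (l1.map pairQ).Perm (l2.map pairQ) := Multiset.coe_eq_coe.1 h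
  have h2 : (l1.map δV).Perm (l2.map δV) := by
    have e1 : l1.map δV = (l1.map pairQ).map (fun p => Finsupp.single p (1 : ℚ)) := by
      rw [List.map_map]; rfl
    have e2 : l2.map δV = (l2.map pairQ).map (fun p => Finsupp.single p (1 : ℚ)) := by
      rw [List.map_map]; rfl
    rw [e1, e2]
    exact hperm.map _
  exact h2.sum_eq

end PreLieAux5
section PreLieAux6

/-- The symmetric "both graftings directly on `c₃`" term. -/
noncomputable def Sq (a b c₃ : CTree) : Multiset (TreeQ × Multiset TreeQ) :=
  (CTree.trunkPos c₃ : Multiset (List ℕ)).bind fun q =>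
    (CTree.trunkPos c₃ : Multiset (List ℕ)).bind fun q' =>
      {pairQ (CTree.cgraft a q' (CTree.cgraft b q c₃))}

lemma Sq_swap (a b c₃ : CTree) : Sq a b c₃ = Sq b a c₃ := by
  rw [Sq, Sq]
  have h1 : ∀ q ∈ (CTree.trunkPos c₃ : Multiset (List ℕ)),
      ((CTree.trunkPos c₃ : Multiset (List ℕ)).bind fun q' =>
          {pairQ (CTree.cgraft a q' (CTree.cgraft b q c₃))})
        = (CTree.trunkPos c₃ : Multiset (List ℕ)).bind fun q' =>
          {pairQ (CTree.cgraft b q (CTree.cgraft a q' c₃))} := by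
    intro q hq
    refine Multiset.bind_congr fun q' hq' => ?_
    rw [pairQ_cgraft_comm q c₃ (validP_of_mem _ _ (Multiset.mem_coe.1 hq))
      q' (validP_of_mem _ _ (Multiset.mem_coe.1 hq')) a b]
  rw [Multiset.bind_congr h1, Multiset.bind_bind]

lemma MQ_dmul_flat (a b c₃ : CTree) :
    ((((dmul a b).flatMap fun w => dmul w c₃).map pairQ : List _) :
        Multiset (TreeQ × Multiset TreeQ))
      = (CTree.trunkPos b : Multiset (List ℕ)).bind fun r =>
          (CTree.trunkPos c₃ : Multiset (List ℕ)).bind fun q =>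
            {pairQ (CTree.cgraft (CTree.cgraft a r b) q c₃)} := by
  rw [MQ_flatMap]
  have h1 : ((dmul a b : List CTree) : Multiset CTree)
      = Multiset.map (fun r => CTree.cgraft a r b) (CTree.trunkPos b : Multiset (List ℕ)) := by
    rw [dmul, Multiset.map_coe]
  rw [h1, Multiset.bind_map]
  exact Multiset.bind_congr fun r _ => MQ_dmul _ _

lemma MQ_split (a b c₃ : CTree) :
    ((((dmul b c₃).flatMap fun w => dmul a w).map pairQ : List _) :
        Multiset (TreeQ × Multiset TreeQ))
      = ((((dmul a b).flatMap fun w => dmul w c₃).map pairQ : List _) :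
          Multiset (TreeQ × Multiset TreeQ)) + Sq a b c₃ := by
  rw [MQ_flatMap]
  have h1 : ((dmul b c₃ : List CTree) : Multiset CTree)
      = Multiset.map (fun q => CTree.cgraft b q c₃)
          (CTree.trunkPos c₃ : Multiset (List ℕ)) := by
    rw [dmul, Multiset.map_coe]
  rw [h1, Multiset.bind_map]
  have step : ∀ q ∈ (CTree.trunkPos c₃ : Multiset (List ℕ)),
      (((dmul a (CTree.cgraft b q c₃)).map pairQ : List _) :
          Multiset (TreeQ × Multiset TreeQ))
        = ((CTree.trunkPos c₃ : Multiset (List ℕ)).bind fun q' =>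
            {pairQ (CTree.cgraft a q' (CTree.cgraft b q c₃))})
          + ((CTree.trunkPos b : Multiset (List ℕ)).bind fun r =>
            {pairQ (CTree.cgraft (CTree.cgraft a r b) q c₃)}) := by
    intro q hq
    have hq' := Multiset.mem_coe.1 hq
    rw [MQ_dmul, trunkPos_cgraft b q c₃ hq', Multiset.add_bind]
    congr 1
    rw [← Multiset.map_coe, Multiset.bind_map]
    refine Multiset.bind_congr fun r _ => ?_
    rw [cgraft_cgraft q c₃ (validP_of_mem q c₃ hq') r a b]
  rw [Multiset.bind_congr step, Multiset.bind_add, add_comm]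
  congr 1
  rw [MQ_dmul_flat a b c₃]
  exact Multiset.bind_bind _ _

end PreLieAux6
theorem doubling_is_preLie (c₁ c₂ c₃ : CTree)
    (h₁ : c₁.adm = true) (h₂ : c₂.adm = true) (h₃ : c₃.adm = true) :
    toMV ((dmul c₁ c₂).flatMap fun w => dmul w c₃) -
        toMV ((dmul c₂ c₃).flatMap fun w => dmul c₁ w) =
      toMV ((dmul c₂ c₁).flatMap fun w => dmul w c₃) -
        toMV ((dmul c₁ c₃).flatMap fun w => dmul c₂ w) := by
  rw [sub_eq_sub_iff_add_eq_add, ← toMV_append, ← toMV_append]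
  apply toMV_congr
  rw [List.map_append, coe_append, List.map_append, coe_append,
    MQ_split c₂ c₁ c₃, MQ_split c₁ c₂ c₃, Sq_swap c₂ c₁ c₃]
  abel
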